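/- arXiv:2308.06184 — 9 statements merged into one kernel-verified Lean document; each statement's English description precedes it below -/
import Mathlib

section
/- Define, for (s,t) ∈ ℝ × (0,1), the functions ξ₁(t) = √((1−t)/t), ξ₂(t) = √(t/(1−t)) and f(s,t) = 2·s·√(t·(1−t)). Then for every (s,t) ∈ ℝ × (0,1): the function s ↦ f(s,t) has derivative at s equal to ξ₁(t)·t + ξ₂(t)·(1−t) (namely 2·√(t(1−t))), and the function t ↦ f(s,t) has derivative at t equal to ξ₁(t)·s − ξ₂(t)·s (namely s·(1−2t)/√(t(1−t))). Since the base coordinates x₁(s,t) = s·t, x₂(s,t) = s·(1−t) have partial derivatives ∂x₁/∂s = t, ∂x₂/∂s = 1−t, ∂x₁/∂t = s, ∂x₂/∂t = −s, this says exactly that the crossing model i_×(s,t) = (st, s(1−t), √((1−t)/t), √(t/(1−t))) of the conjugate surface is an exact Lagrangian parametrization with primitive f. -/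
namespace Real

theorem sqrt_div_mul_self {b : ℝ} (a : ℝ) (hb : 0 ≤ b) : √(a / b) * b = √(a * b) := by
  rcases hb.eq_or_lt with rfl | hb
  · simp
  calc √(a / b) * b = √(a / b) * √(b ^ 2) := by rw [sqrt_sq hb.le]
    _ = √(a / b * b ^ 2) := (sqrt_mul' _ (sq_nonneg b)).symm
    _ = √(a * b) := by congr 1; field_simp

theorem sqrt_div_eq_div_sqrt_mul {a : ℝ} (ha : 0 ≤ a) (b : ℝ) : √(a / b) = a / √(a * b) := by
  rcases ha.eq_or_lt with rfl | ha
  · simp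
  calc √(a / b) = √a / √b := sqrt_div ha.le b
    _ = √a * √a / (√a * √b) := (mul_div_mul_left _ _ (sqrt_pos.mpr ha).ne').symm
    _ = a / √(a * b) := by rw [mul_self_sqrt ha.le, sqrt_mul ha.le]

theorem sqrt_div_mul_add_sqrt_div_mul {a b : ℝ} (ha : 0 ≤ a) (hb : 0 ≤ b) :
    √(b / a) * a + √(a / b) * b = 2 * √(a * b) := by
  rw [sqrt_div_mul_self _ ha, sqrt_div_mul_self _ hb, mul_comm b a, two_mul]

theorem sqrt_div_sub_sqrt_div {a b : ℝ} (ha : 0 ≤ a) (hb : 0 ≤ b) :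
    √(b / a) - √(a / b) = (b - a) / √(a * b) := by
  rw [sqrt_div_eq_div_sqrt_mul hb, sqrt_div_eq_div_sqrt_mul ha, mul_comm b a, sub_div]

end Real

open Real

theorem hasDerivAt_sqrt_mul_one_sub {t : ℝ} (ht : t * (1 - t) ≠ 0) :
    HasDerivAt (fun t' : ℝ => √(t' * (1 - t'))) ((1 - 2 * t) / (2 * √(t * (1 - t)))) t := by
  have hprod : HasDerivAt (fun t' : ℝ => t' * (1 - t')) (1 - 2 * t) t :=
    ((hasDerivAt_id' t).mul ((hasDerivAt_id' t).const_sub 1)).congr_deriv (by ring)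
  exact hprod.sqrt ht

/-- The crossing model of the conjugate surface is an exact Lagrangian
parametrization with primitive `f(s,t) = 2·s·√(t(1−t))`: for `(s,t) ∈ ℝ × (0,1)`,
the `s`-derivative of `f` is `ξ₁(t)·t + ξ₂(t)·(1−t)` (namely `2√(t(1−t))`) and the
`t`-derivative of `f` is `ξ₁(t)·s − ξ₂(t)·s` (namely `s(1−2t)/√(t(1−t))`), where
`ξ₁(t) = √((1−t)/t)` and `ξ₂(t) = √(t/(1−t))`. -/
theorem conjugate_crossing_exact_lagrangian (s t : ℝ) (ht : t ∈ Set.Ioo (0 : ℝ) 1) :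
    HasDerivAt (fun s' : ℝ => 2 * s' * Real.sqrt (t * (1 - t)))
      (Real.sqrt ((1 - t) / t) * t + Real.sqrt (t / (1 - t)) * (1 - t)) s ∧
    Real.sqrt ((1 - t) / t) * t + Real.sqrt (t / (1 - t)) * (1 - t)
      = 2 * Real.sqrt (t * (1 - t)) ∧
    HasDerivAt (fun t' : ℝ => 2 * s * Real.sqrt (t' * (1 - t')))
      (Real.sqrt ((1 - t) / t) * s - Real.sqrt (t / (1 - t)) * s) t ∧
    Real.sqrt ((1 - t) / t) * s - Real.sqrt (t / (1 - t)) * s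
      = s * (1 - 2 * t) / Real.sqrt (t * (1 - t)) := by
  obtain ⟨ht0, ht1⟩ := ht
  have h1t : 0 < 1 - t := sub_pos.mpr ht1
  have hs_coeff := sqrt_div_mul_add_sqrt_div_mul ht0.le h1t.le
  have ht_coeff : √((1 - t) / t) * s - √(t / (1 - t)) * s = s * (1 - 2 * t) / √(t * (1 - t)) := by
    rw [← sub_mul, sqrt_div_sub_sqrt_div ht0.le h1t.le]; ring
  refine ⟨?_, hs_coeff, ?_, ht_coeff⟩
  · rw [hs_coeff]
    simpa using ((hasDerivAt_id s).const_mul 2).mul_const (√(t * (1 - t)))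
  · rw [ht_coeff]
    refine ((hasDerivAt_sqrt_mul_one_sub (by positivity)).const_mul (2 * s)).congr_deriv ?_
    have : √(t * (1 - t)) ≠ 0 := by positivity
    field_simp
end

section
/- The map i_× : ℝ × (0,1) → ℝ⁴ defined by i_×(s,t) = (s·t, s·(1−t), √((1−t)/t), √(t/(1−t))) is injective, and its Fréchet derivative at every point (s,t) ∈ ℝ × (0,1) is an injective linear map ℝ² → ℝ⁴; that is, i_× is an injective immersion (a smooth Lagrangian embedding of the crossing model of the conjugate surface). -/
/-
Since `st + s(1 - t) = s`, the linear projection `(x₁, x₂, ξ₁, ξ₂) ↦ (x₁ + x₂, ξ₂)` turns `i_×`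
into `(s, t) ↦ (s, √(t / (1 - t)))`, which is an injective immersion of `ℝ × (0,1)`: its second
coordinate is injective in `t` with nonvanishing derivative. If `π ∘ f` is injective, or has
injective derivative, for a linear `π`, then so does `f`.
-/

/-- The crossing model `i_×(s,t) = (st, s(1−t), √((1−t)/t), √(t/(1−t)))` of the
conjugate Lagrangian surface. -/
noncomputable def iCross (p : ℝ × ℝ) : ℝ × ℝ × ℝ × ℝ :=
  (p.1 * p.2, p.1 * (1 - p.2),
    Real.sqrt ((1 - p.2) / p.2), Real.sqrt (p.2 / (1 - p.2)))

open Function ContinuousLinearMap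

theorem HasFDerivAt.injective_of_comp {𝕜 E F G : Type*} [NontriviallyNormedField 𝕜]
    [NormedAddCommGroup E] [NormedSpace 𝕜 E] [NormedAddCommGroup F] [NormedSpace 𝕜 F]
    [NormedAddCommGroup G] [NormedSpace 𝕜 G] {f : E → F} {L : E →L[𝕜] F} {p : E}
    (π : F →L[𝕜] G) {M : E →L[𝕜] G} (hf : HasFDerivAt f L p) (hπf : HasFDerivAt (π ∘ f) M p)
    (hM : Injective M) : Injective L := by
  have hM_eq : π.comp L = M := (π.hasFDerivAt.comp p hf).unique hπf
  rw [← hM_eq, coe_comp] at hM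
  exact hM.of_comp

theorem injOn_sqrt_div_one_sub : Set.InjOn (fun t : ℝ => √(t / (1 - t))) (Set.Ico 0 1) := by
  rintro t ⟨ht0, ht1⟩ t' ⟨ht0', ht1'⟩ h
  have h1t : 0 < 1 - t := sub_pos.2 ht1
  have h1t' : 0 < 1 - t' := sub_pos.2 ht1'
  have hsq := (Real.sqrt_inj (div_nonneg ht0 h1t.le) (div_nonneg ht0' h1t'.le)).1 h
  rw [div_eq_div_iff h1t.ne' h1t'.ne'] at hsq
  linarith

theorem hasDerivAt_sqrt_div_one_sub {t : ℝ} (ht0 : 0 < t) (ht1 : t < 1) :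
    HasDerivAt (fun t : ℝ => √(t / (1 - t))) (1 / (1 - t) ^ 2 / (2 * √(t / (1 - t)))) t := by
  have h1t : 1 - t ≠ 0 := (sub_pos.2 ht1).ne'
  have hdiv : HasDerivAt (fun t : ℝ => t / (1 - t)) (1 / (1 - t) ^ 2) t :=
    ((hasDerivAt_id' t).div ((hasDerivAt_id' t).const_sub 1) h1t).congr_deriv
      (by ring)
  exact hdiv.sqrt (div_pos ht0 (sub_pos.2 ht1)).ne'

/-- The projection `(x₁, x₂, ξ₁, ξ₂) ↦ (x₁ + x₂, ξ₂)`. -/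
noncomputable def crossProj : ℝ × ℝ × ℝ × ℝ →L[ℝ] ℝ × ℝ :=
  (fst ℝ ℝ _ + (fst ℝ ℝ _).comp (snd ℝ ℝ _)).prod
    ((snd ℝ ℝ ℝ).comp ((snd ℝ ℝ _).comp (snd ℝ ℝ _)))

theorem crossProj_comp_iCross :
    crossProj ∘ iCross = Prod.map id fun t : ℝ => √(t / (1 - t)) := by
  ext p
  · simp only [crossProj, iCross, comp_apply, ContinuousLinearMap.prod_apply, add_apply,
      coe_fst', ContinuousLinearMap.comp_apply, coe_snd', Prod.map_fst, id_eq]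
    ring
  · simp [crossProj, iCross]

theorem differentiableAt_iCross {p : ℝ × ℝ} (ht0 : 0 < p.2) (ht1 : p.2 < 1) :
    DifferentiableAt ℝ iCross p := by
  have h1t : 0 < 1 - p.2 := sub_pos.2 ht1
  unfold iCross
  fun_prop (disch := positivity)

/-- `i_×` is injective on `ℝ × (0,1)`, and at every point of `ℝ × (0,1)`
its Fréchet derivative is an injective linear map `ℝ² → ℝ⁴`; i.e. `i_×` is an injective
immersion. -/
theorem iCross_injective_immersion :
    Set.InjOn iCross (Set.univ ×ˢ Set.Ioo (0 : ℝ) 1) ∧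
    ∀ p : ℝ × ℝ, p ∈ Set.univ ×ˢ Set.Ioo (0 : ℝ) 1 →
      ∃ L : ℝ × ℝ →L[ℝ] ℝ × ℝ × ℝ × ℝ,
        HasFDerivAt iCross L p ∧ Function.Injective L := by
  constructor
  · refine Set.InjOn.of_comp (g := crossProj) ?_
    rw [crossProj_comp_iCross]
    exact (Set.injOn_id _).prodMap (injOn_sqrt_div_one_sub.mono Set.Ioo_subset_Ico_self)
  · rintro p ⟨-, ht0, ht1⟩
    have hL := (differentiableAt_iCross ht0 ht1).hasFDerivAt
    have hg := hasDerivAt_sqrt_div_one_sub ht0 ht1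
    have hg' : 1 / (1 - p.2) ^ 2 / (2 * √(p.2 / (1 - p.2))) ≠ 0 := by
      have := sub_pos.2 ht1
      positivity
    have hmodel := (hasFDerivAt_id p.1).prodMap p hg.hasFDerivAt
    rw [← crossProj_comp_iCross] at hmodel
    refine ⟨_, hL, hL.injective_of_comp crossProj hmodel ?_⟩
    rw [coe_prodMap']
    exact injective_id.prodMap (smul_left_injective ℝ hg')
end

section
/- For (r,θ) ∈ ℝ² define x₁(r,θ) = r²·sin(3θ/2)·cos(θ/2), x₂(r,θ) = r²·sin(3θ/2)·sin(θ/2), ξ₁(r,θ) = −r·sin θ, ξ₂(r,θ) = −r·cos θ, and f(r,θ) = −(2/3)·r³·sin²(3θ/2). Then at every (r,θ) ∈ ℝ²: ξ₁·(∂x₁/∂r) + ξ₂·(∂x₂/∂r) equals the partial derivative of f in r (both sides being −2·r²·sin²(3θ/2)), and ξ₁·(∂x₁/∂θ) + ξ₂·(∂x₂/∂θ) equals the partial derivative of f in θ (both sides being −r³·sin(3θ)). Hence the map Φ_{L_{1/2}}(r,θ) = (x₁,x₂,ξ₁,ξ₂)(r,θ) is an exact Lagrangian parametrization with primitive f. 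-/
/-!
Write `(x₁, x₂) = ρ(θ) (cos (θ/2), sin (θ/2))` with `ρ = r² sin (3θ/2)`, so that both partial
derivatives of `(x₁, x₂)` are combinations of the rotating frame `(cos (θ/2), sin (θ/2))`,
`(-sin (θ/2), cos (θ/2))`. Pairing this frame with `(sin θ, cos θ)` shifts the angle by `θ`,
turning every `θ/2` into `3θ/2`; what is left are the identities `-2r²s² = ∂ᵣ(-(2/3)r³s²)` and
`-2r³sc = ∂_θ(-(2/3)r³s²)` for `s = sin (3θ/2)`, `c = cos (3θ/2)`, and `2sc = sin 3θ`.
-/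

open Real

theorem sin_mul_add_cos_mul_frame (θ φ a b : ℝ) :
    sin θ * (a * cos φ - b * sin φ) + cos θ * (a * sin φ + b * cos φ)
      = a * sin (θ + φ) + b * cos (θ + φ) := by
  rw [sin_add, cos_add]
  ring

section HalfAngleFrame

variable {ρ : ℝ → ℝ} {ρ' θ : ℝ}

theorem HasDerivAt.mul_cos_half (hρ : HasDerivAt ρ ρ' θ) :
    HasDerivAt (fun t => ρ t * Real.cos (t / 2))
      (ρ' * Real.cos (θ / 2) - ρ θ / 2 * Real.sin (θ / 2)) θ := by
  refine (hρ.mul (hasDerivAt_id' (x := θ) |>.div_const 2).cos).congr_deriv ?_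
  ring

theorem HasDerivAt.mul_sin_half (hρ : HasDerivAt ρ ρ' θ) :
    HasDerivAt (fun t => ρ t * Real.sin (t / 2))
      (ρ' * Real.sin (θ / 2) + ρ θ / 2 * Real.cos (θ / 2)) θ := by
  refine (hρ.mul (hasDerivAt_id' (x := θ) |>.div_const 2).sin).congr_deriv ?_
  ring

end HalfAngleFrame

/-- The map `Φ_{L_{1/2}}(r,θ) = (x₁,x₂,ξ₁,ξ₂)(r,θ)` with
`x₁ = r²sin(3θ/2)cos(θ/2)`, `x₂ = r²sin(3θ/2)sin(θ/2)`, `ξ₁ = −r sin θ`,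
`ξ₂ = −r cos θ` is an exact Lagrangian parametrization with primitive
`f(r,θ) = −(2/3)r³sin²(3θ/2)`: at every `(r,θ)`,
`ξ₁·∂x₁/∂r + ξ₂·∂x₂/∂r = ∂f/∂r` (both sides being `−2r²sin²(3θ/2)`) and
`ξ₁·∂x₁/∂θ + ξ₂·∂x₂/∂θ = ∂f/∂θ` (both sides being `−r³sin(3θ)`). -/
theorem PhiHalf_exact_lagrangian (r θ : ℝ) :
    ((-r * Real.sin θ) *
        deriv (fun r' : ℝ => r' ^ 2 * Real.sin (3 * θ / 2) * Real.cos (θ / 2)) r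
      + (-r * Real.cos θ) *
        deriv (fun r' : ℝ => r' ^ 2 * Real.sin (3 * θ / 2) * Real.sin (θ / 2)) r
      = deriv (fun r' : ℝ => -(2 / 3) * r' ^ 3 * Real.sin (3 * θ / 2) ^ 2) r) ∧
    deriv (fun r' : ℝ => -(2 / 3) * r' ^ 3 * Real.sin (3 * θ / 2) ^ 2) r
      = -2 * r ^ 2 * Real.sin (3 * θ / 2) ^ 2 ∧
    ((-r * Real.sin θ) *
        deriv (fun θ' : ℝ => r ^ 2 * Real.sin (3 * θ' / 2) * Real.cos (θ' / 2)) θ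
      + (-r * Real.cos θ) *
        deriv (fun θ' : ℝ => r ^ 2 * Real.sin (3 * θ' / 2) * Real.sin (θ' / 2)) θ
      = deriv (fun θ' : ℝ => -(2 / 3) * r ^ 3 * Real.sin (3 * θ' / 2) ^ 2) θ) ∧
    deriv (fun θ' : ℝ => -(2 / 3) * r ^ 3 * Real.sin (3 * θ' / 2) ^ 2) θ
      = -(r ^ 3) * Real.sin (3 * θ) := by
  have hs : HasDerivAt (fun t => sin (3 * t / 2)) (cos (3 * θ / 2) * (3 / 2)) θ := by
    simpa using (((hasDerivAt_id θ).const_mul 3).div_const 2).sin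
  have hρ : HasDerivAt (fun t => r ^ 2 * sin (3 * t / 2)) (r ^ 2 * (cos (3 * θ / 2) * (3 / 2))) θ :=
    hs.const_mul _
  have hf : HasDerivAt (fun t => -(2 / 3) * r ^ 3 * sin (3 * t / 2) ^ 2)
      (-(2 / 3) * r ^ 3 * (2 * sin (3 * θ / 2) * (cos (3 * θ / 2) * (3 / 2)))) θ := by
    refine ((hs.pow 2).const_mul _).congr_deriv ?_
    norm_num
  rw [((hasDerivAt_pow 2 r).mul_const _).mul_const _ |>.deriv,
    ((hasDerivAt_pow 2 r).mul_const _).mul_const _ |>.deriv,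
    ((hasDerivAt_pow 3 r).const_mul _).mul_const _ |>.deriv,
    hρ.mul_cos_half.deriv, hρ.mul_sin_half.deriv, hf.deriv]
  simp only [Nat.reduceSub, Nat.cast_ofNat, pow_one]
  have frame (a b : ℝ) := sin_mul_add_cos_mul_frame θ (θ / 2) a b
  rw [show θ + θ / 2 = 3 * θ / 2 by ring] at frame
  have double : sin (3 * θ) = 2 * sin (3 * θ / 2) * cos (3 * θ / 2) := by
    rw [← sin_two_mul]
    ring_nf
  refine ⟨?_, ?_, ?_, ?_⟩
  · linear_combination (-r) * frame (2 * r * sin (3 * θ / 2)) 0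
  · ring
  · linear_combination
      (-r) * frame (r ^ 2 * (cos (3 * θ / 2) * (3 / 2))) (r ^ 2 * sin (3 * θ / 2) / 2)
  · rw [double]
    ring
end

section
/- The map Φ_{L_{1/2}}(r,θ) = (r²·sin(3θ/2)·cos(θ/2), r²·sin(3θ/2)·sin(θ/2), −r·sin θ, −r·cos θ) is injective on (0,∞) × [0,2π): if r, r′ > 0 and θ, θ′ ∈ [0,2π) satisfy Φ_{L_{1/2}}(r,θ) = Φ_{L_{1/2}}(r′,θ′), then r = r′ and θ = θ′. -/
/-!
The last two coordinates of `PhiHalf r θ` are `-(r sin θ, r cos θ)`, polar coordinates in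
disguise: they determine `r` as their norm and then `(sin θ, cos θ)`, which pins down `θ` in
any half-open interval of length `2π`.
-/

/-- The intermediate Lagrangian filling `Φ_{L_{1/2}}` of the Reidemeister III1 move. -/
noncomputable def PhiHalf (r θ : ℝ) : ℝ × ℝ × ℝ × ℝ :=
  (r ^ 2 * Real.sin (3 * θ / 2) * Real.cos (θ / 2),
   r ^ 2 * Real.sin (3 * θ / 2) * Real.sin (θ / 2),
   -r * Real.sin θ, -r * Real.cos θ)

namespace Real

theorem sq_eq_sq_of_mul_sin_eq_of_mul_cos_eq {r r' θ θ' : ℝ}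
    (hs : r * sin θ = r' * sin θ') (hc : r * cos θ = r' * cos θ') : r ^ 2 = r' ^ 2 := by
  linear_combination (r * sin θ + r' * sin θ') * hs + (r * cos θ + r' * cos θ') * hc
    - r ^ 2 * sin_sq_add_cos_sq θ + r' ^ 2 * sin_sq_add_cos_sq θ'

theorem eq_of_sin_eq_of_cos_eq_of_mem_Ico {a θ θ' : ℝ}
    (hθ : θ ∈ Set.Ico a (a + 2 * π)) (hθ' : θ' ∈ Set.Ico a (a + 2 * π))
    (hs : sin θ = sin θ') (hc : cos θ = cos θ') : θ = θ' := by
  have hcos : cos (θ - θ') = 1 := by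
    rw [cos_sub, hs, hc]
    linear_combination cos_sq_add_sin_sq θ'
  have := (cos_eq_one_iff_of_lt_of_lt (by linarith [hθ.1, hθ'.2]) (by linarith [hθ.2, hθ'.1])).mp
    hcos
  linarith

theorem polar_injOn {a r r' θ θ' : ℝ} (hr : 0 < r) (hr' : 0 < r')
    (hθ : θ ∈ Set.Ico a (a + 2 * π)) (hθ' : θ' ∈ Set.Ico a (a + 2 * π))
    (hs : r * sin θ = r' * sin θ') (hc : r * cos θ = r' * cos θ') : r = r' ∧ θ = θ' := by
  obtain rfl : r = r' :=
    (sq_eq_sq₀ hr.le hr'.le).mp (sq_eq_sq_of_mul_sin_eq_of_mul_cos_eq hs hc)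
  exact ⟨rfl, eq_of_sin_eq_of_cos_eq_of_mem_Ico hθ hθ'
    (mul_left_cancel₀ hr.ne' hs) (mul_left_cancel₀ hr.ne' hc)⟩

end Real

/-- `Φ_{L_{1/2}}` is injective on `(0,∞) × [0,2π)`. -/
theorem PhiHalf_injective (r r' θ θ' : ℝ) (hr : 0 < r) (hr' : 0 < r')
    (hθ : θ ∈ Set.Ico 0 (2 * Real.pi)) (hθ' : θ' ∈ Set.Ico 0 (2 * Real.pi))
    (h : PhiHalf r θ = PhiHalf r' θ') : r = r' ∧ θ = θ' := by
  simp only [PhiHalf, Prod.mk.injEq, neg_mul, neg_inj] at h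
  rw [← zero_add (2 * Real.pi)] at hθ hθ'
  exact Real.polar_injOn hr hr' hθ hθ' h.2.2.1 h.2.2.2
end

section
/- Let f : ℝ → ℝ be differentiable and let ε ∈ {1, −1}. Define G : ℝ × (0,∞) → ℝ⁴ by G(x,w) = (x, ε·(w − f(x)), ε·f′(x)/w, 1/w). Then G is injective, and G is an exact Lagrangian parametrization with primitive (x,w) ↦ ε·log w: at every (x,w) ∈ ℝ × (0,∞), writing G = (x₁,x₂,ξ₁,ξ₂), one has ξ₁·(∂x₁/∂x) + ξ₂·(∂x₂/∂x) = 0 = ∂(ε·log w)/∂x and ξ₁·(∂x₁/∂w) + ξ₂·(∂x₂/∂w) = ε/w = ∂(ε·log w)/∂w. -/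
/-!
`G` is already injective through its coordinates `(x₁, ξ₂) = (x, 1/w)`. In the `x`-direction
the two terms `ξ₁ ∂ₓx₁ = εf′/w` and `ξ₂ ∂ₓx₂ = -εf′/w` cancel, and in the `w`-direction only
`ξ₂ ∂_w x₂ = ε/w` survives, which is the derivative of `ε log w`.
-/

theorem injective_of_fst_of_snd_snd_snd_eq_one_div {α β γ 𝕜 : Type*} [DivisionRing 𝕜]
    (g : α × 𝕜 → α × β × γ × 𝕜) (hfst : ∀ p, (g p).1 = p.1)
    (hlast : ∀ p, (g p).2.2.2 = 1 / p.2) : Function.Injective g := by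
  intro p q hpq
  have hfst_eq : p.1 = q.1 := by rw [← hfst p, ← hfst q, hpq]
  have hinv_eq : 1 / p.2 = 1 / q.2 := by rw [← hlast p, ← hlast q, hpq]
  exact Prod.ext hfst_eq (by simpa only [one_div, inv_inj] using hinv_eq)

section Deriv

variable {𝕜 : Type*} [NontriviallyNormedField 𝕜]

theorem deriv_const_mul_const_sub (c a : 𝕜) (f : 𝕜 → 𝕜) (x : 𝕜) :
    deriv (fun y => c * (a - f y)) x = -(c * deriv f x) := by
  rw [deriv_const_mul_field, deriv_const_sub, mul_neg]

theorem deriv_const_mul_sub_const (c a x : 𝕜) : deriv (fun y => c * (y - a)) x = c := by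
  rw [deriv_const_mul_field, deriv_sub_const, deriv_id'', mul_one]

end Deriv

theorem Real.deriv_const_mul_log (c x : ℝ) : deriv (fun y => c * Real.log y) x = c / x := by
  rw [deriv_const_mul_field, Real.deriv_log, div_eq_mul_inv]

theorem RII_sheet_injective_exact_general (f : ℝ → ℝ) (ε : ℝ) :
    Set.InjOn (fun p : ℝ × ℝ =>
        (p.1, ε * (p.2 - f p.1), ε * deriv f p.1 / p.2, 1 / p.2))
      (Set.univ ×ˢ Set.Ioi (0 : ℝ)) ∧
    ∀ x w : ℝ, 0 < w →
      ((ε * deriv f x / w) * deriv (fun x' : ℝ => x') x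
          + (1 / w) * deriv (fun x' : ℝ => ε * (w - f x')) x = 0) ∧
      deriv (fun _ : ℝ => ε * Real.log w) x = 0 ∧
      ((ε * deriv f x / w) * deriv (fun _ : ℝ => x) w
          + (1 / w) * deriv (fun w' : ℝ => ε * (w' - f x)) w = ε / w) ∧
      deriv (fun w' : ℝ => ε * Real.log w') w = ε / w := by
  refine ⟨(injective_of_fst_of_snd_snd_snd_eq_one_div _ (fun _ => rfl) fun _ => rfl).injOn,
    fun x w _ => ⟨?_, deriv_const x _, ?_, Real.deriv_const_mul_log ε w⟩⟩
  · rw [deriv_id'', deriv_const_mul_const_sub]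
    ring
  · rw [deriv_const, deriv_const_mul_sub_const]
    ring

/-- For `f : ℝ → ℝ` differentiable and `ε ∈ {1,−1}`, the map
`G(x,w) = (x, ε(w − f(x)), ε f′(x)/w, 1/w)` on `ℝ × (0,∞)` is injective, and it is an
exact Lagrangian parametrization with primitive `(x,w) ↦ ε·log w`:
`ξ₁·∂x₁/∂x + ξ₂·∂x₂/∂x = 0 = ∂(ε log w)/∂x` and
`ξ₁·∂x₁/∂w + ξ₂·∂x₂/∂w = ε/w = ∂(ε log w)/∂w`. -/
theorem RII_sheet_injective_exact (f : ℝ → ℝ) (hf : Differentiable ℝ f) (ε : ℝ)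
    (hε : ε = 1 ∨ ε = -1) :
    Set.InjOn (fun p : ℝ × ℝ =>
        (p.1, ε * (p.2 - f p.1), ε * deriv f p.1 / p.2, 1 / p.2))
      (Set.univ ×ˢ Set.Ioi (0 : ℝ)) ∧
    ∀ x w : ℝ, 0 < w →
      ((ε * deriv f x / w) * deriv (fun x' : ℝ => x') x
          + (1 / w) * deriv (fun x' : ℝ => ε * (w - f x')) x = 0) ∧
      deriv (fun _ : ℝ => ε * Real.log w) x = 0 ∧
      ((ε * deriv f x / w) * deriv (fun _ : ℝ => x) w
          + (1 / w) * deriv (fun w' : ℝ => ε * (w' - f x)) w = ε / w) ∧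
      deriv (fun w' : ℝ => ε * Real.log w') w = ε / w :=
  RII_sheet_injective_exact_general f ε
end

section
/- Let t ∈ ℝ and let α ∈ ℝ, with R the rotation of ℝ² by angle α (the matrix with rows (cos α, −sin α) and (sin α, cos α)). Define G : ℝ × (0,∞) → ℝ² × ℝ² by G(x,w) = (R·(x, t − w − 1/2), R·(0, −1/w)). Then, writing G = (b₁, b₂, η₁, η₂), at every (x,w) ∈ ℝ × (0,∞): η₁·(∂b₁/∂x) + η₂·(∂b₂/∂x) = 0 and η₁·(∂b₁/∂w) + η₂·(∂b₂/∂w) = 1/w; i.e. G is an exact Lagrangian parametrization with primitive (x,w) ↦ log w. -/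
open Real

section Rotation

theorem rotate_dot_rotate (α a b c d : ℝ) :
    (a * cos α - b * sin α) * (c * cos α - d * sin α)
      + (a * sin α + b * cos α) * (c * sin α + d * cos α) = a * c + b * d := by
  linear_combination (a * c + b * d) * sin_sq_add_cos_sq α

variable {α : ℝ} {f g : ℝ → ℝ} {f' g' s : ℝ}

theorem hasDerivAt_rotate_fst (hf : HasDerivAt f f' s) (hg : HasDerivAt g g' s) :
    HasDerivAt (fun u => f u * cos α - g u * sin α) (f' * cos α - g' * sin α) s :=
  (hf.mul_const _).sub (hg.mul_const _)

theorem hasDerivAt_rotate_snd (hf : HasDerivAt f f' s) (hg : HasDerivAt g g' s) :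
    HasDerivAt (fun u => f u * sin α + g u * cos α) (f' * sin α + g' * cos α) s :=
  (hf.mul_const _).add (hg.mul_const _)

end Rotation

theorem RIII2_sheet_exact_lagrangian_general (t α x w : ℝ) :
    let η₁ := (0 : ℝ) * Real.cos α - (-(1 / w)) * Real.sin α
    let η₂ := (0 : ℝ) * Real.sin α + (-(1 / w)) * Real.cos α
    (η₁ * deriv (fun x' : ℝ => x' * Real.cos α - (t - w - 1 / 2) * Real.sin α) x
      + η₂ * deriv (fun x' : ℝ => x' * Real.sin α + (t - w - 1 / 2) * Real.cos α) x
      = 0) ∧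
    (η₁ * deriv (fun w' : ℝ => x * Real.cos α - (t - w' - 1 / 2) * Real.sin α) w
      + η₂ * deriv (fun w' : ℝ => x * Real.sin α + (t - w' - 1 / 2) * Real.cos α) w
      = 1 / w) := by
  intro η₁ η₂
  -- R preserves the pairing, so both identities reduce to pairing (0, -1/w)
  -- with the unrotated partials (1, 0) and (0, -1).
  have hx := hasDerivAt_id' x
  have hcx := hasDerivAt_const x (t - w - 1 / 2)
  have hcw := hasDerivAt_const w x
  have hdw : HasDerivAt (fun w' : ℝ => t - w' - 1 / 2) (-1) w := by
    simpa using ((hasDerivAt_id w).const_sub t).sub_const (1 / 2)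
  constructor
  · rw [(hasDerivAt_rotate_fst hx hcx).deriv,
      (hasDerivAt_rotate_snd hx hcx).deriv, rotate_dot_rotate]
    ring
  · rw [(hasDerivAt_rotate_fst hcw hdw).deriv,
      (hasDerivAt_rotate_snd hcw hdw).deriv, rotate_dot_rotate]
    ring

/-- For the rotation `R` of `ℝ²` by angle `α`, the sheet
`G(x,w) = (R·(x, t − w − 1/2), R·(0, −1/w))` of the Reidemeister III2 local model is an
exact Lagrangian parametrization with primitive `(x,w) ↦ log w`:
`η₁·∂b₁/∂x + η₂·∂b₂/∂x = 0` and `η₁·∂b₁/∂w + η₂·∂b₂/∂w = 1/w`. -/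
theorem RIII2_sheet_exact_lagrangian (t α x w : ℝ) (hw : 0 < w) :
    let η₁ := (0 : ℝ) * Real.cos α - (-(1 / w)) * Real.sin α
    let η₂ := (0 : ℝ) * Real.sin α + (-(1 / w)) * Real.cos α
    (η₁ * deriv (fun x' : ℝ => x' * Real.cos α - (t - w - 1 / 2) * Real.sin α) x
      + η₂ * deriv (fun x' : ℝ => x' * Real.sin α + (t - w - 1 / 2) * Real.cos α) x
      = 0) ∧
    (η₁ * deriv (fun w' : ℝ => x * Real.cos α - (t - w' - 1 / 2) * Real.sin α) w
      + η₂ * deriv (fun w' : ℝ => x * Real.sin α + (t - w' - 1 / 2) * Real.cos α) w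
      = 1 / w) :=
  RIII2_sheet_exact_lagrangian_general t α x w
end

section
/- Let k be a field and let V_{i−1} ⊂ V_i be subspaces of a k-vector space V with finrank V_{i−1} = i−1 and finrank V_i = i. For every nonzero ω′ ∈ ⋀^{i−1} V_{i−1} and every nonzero ω ∈ ⋀^{i} V_i (both regarded in the exterior powers of V via the canonical maps), there exists v ∈ V_i such that ω′ ∧ v = ω; moreover, any two such v differ by an element of V_{i−1}. -/
/-!
If `b : Fin n → W` spans `W`, then `⋀ⁿ W` is the line spanned by `b₁ ∧ ⋯ ∧ bₙ`, and this product
is nonzero exactly when `b` is linearly independent. Extending a basis `b` of `W₁` by a vector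
`u ∈ W₂ \ W₁` to a basis of `W₂` gives `ω' = c • (b₁ ∧ ⋯ ∧ bᵢ)` with `c ≠ 0` and
`ω = d • (b₁ ∧ ⋯ ∧ bᵢ ∧ u)`, so `v = (d / c) • u` works; and `ω' ∧ (v - v') = 0` forces
`b₁, …, bᵢ, v - v'` to be linearly dependent, i.e. `v - v' ∈ W₁`.
-/

/-- The image of the `m`-th exterior power `⋀^m W` of a subspace `W ≤ V` inside the
exterior algebra of `V`, under the canonical map induced by the inclusion `W → V`. -/
noncomputable def extPowerImage (k : Type*) [Field k] {V : Type*} [AddCommGroup V]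
    [Module k V] (m : ℕ) (W : Submodule k V) : Submodule k (ExteriorAlgebra k V) :=
  (Submodule.map (ExteriorAlgebra.ι k (M := V)) W) ^ m

open Submodule Set

namespace ExteriorAlgebra

section CommRing

variable {R M : Type*} [CommRing R] [AddCommGroup M] [Module R M] {n : ℕ}

theorem ιMulti_family_fin_eq_ιMulti (v : Fin n → M) (s : powersetCard (Fin n) n) :
    ιMulti_family R n v s = ιMulti R n v := by
  have hs : (s : Finset (Fin n)) = Finset.univ := Finset.eq_univ_of_card _ (by simp)
  have : powersetCard.ofFinEmbEquiv.symm s = RelEmbedding.refl (· ≤ ·) :=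
    (Finset.orderEmbOfFin_unique' s.prop fun x => by simp [hs]).symm
  rw [ιMulti_family, this]
  rfl

theorem exteriorPower_eq_span_ιMulti {v : Fin n → M} (hv : span R (range v) = ⊤) :
    ⋀[R]^n M = R ∙ ιMulti R n v := by
  have : Nonempty (powersetCard (Fin n) n) := ⟨⟨Finset.univ, by simp⟩⟩
  rw [← exteriorPower.ιMulti_family_span_fixedDegree_of_span R (n := n) hv,
    funext (ιMulti_family_fin_eq_ιMulti (R := R) v), range_const]

theorem ιMulti_snoc (v : Fin n → M) (x : M) :
    ιMulti R (n + 1) (Fin.snoc v x) = ιMulti R n v * ι R x := by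
  rw [ιMulti_apply, ιMulti_apply, List.ofFn_succ', List.concat_eq_append, List.prod_append]
  simp [Fin.snoc_castSucc, Fin.snoc_last]

end CommRing

variable {k V : Type*} [Field k] [AddCommGroup V] [Module k V] {n : ℕ}

theorem ιMulti_ne_zero_iff {v : Fin n → V} : ιMulti k n v ≠ 0 ↔ LinearIndependent k v := by
  refine ⟨fun h => ?_, fun hv => ?_⟩
  · by_contra hv
    exact h (AlternatingMap.map_linearDependent _ v hv)
  · have s : powersetCard (Fin n) n := ⟨Finset.univ, by simp⟩
    have := (exteriorPower.ιMulti_family_linearIndependent_field (n := n) hv).ne_zero s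
    rw [← ιMulti_family_fin_eq_ιMulti v s]
    exact fun h => this (Subtype.ext h)

theorem ιMulti_mul_ι_eq_zero_iff {v : Fin n → V} (hv : LinearIndependent k v) (x : V) :
    ιMulti k n v * ι k x = 0 ↔ x ∈ span k (range v) := by
  rw [← ιMulti_snoc, ← not_iff_not, ← ne_eq, ιMulti_ne_zero_iff, linearIndependent_finSnoc]
  exact and_iff_right hv

end ExteriorAlgebra

open ExteriorAlgebra

section

variable {k V : Type*} [Field k] [AddCommGroup V] [Module k V]

theorem Submodule.exists_linearIndependent_span_eq {n : ℕ} (W : Submodule k V)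
    [FiniteDimensional k W] (h : Module.finrank k W = n) :
    ∃ b : Fin n → V, LinearIndependent k b ∧ span k (range b) = W := by
  let B := Module.finBasisOfFinrankEq k W h
  refine ⟨W.subtype ∘ B, B.linearIndependent.map' _ W.ker_subtype, ?_⟩
  rw [range_comp, ← map_span, B.span_eq, Submodule.map_top, range_subtype]

theorem Submodule.span_range_snoc_eq {n : ℕ} {b : Fin n → V} {u : V} {W₁ W₂ : Submodule k V}
    [FiniteDimensional k W₂] (hb : LinearIndependent k b) (hbW : span k (range b) = W₁)
    (hle : W₁ ≤ W₂) (h₂ : Module.finrank k W₂ = n + 1) (hu₂ : u ∈ W₂) (hu₁ : u ∉ W₁) :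
    span k (range (Fin.snoc b u : Fin (n + 1) → V)) = W₂ := by
  have hli : LinearIndependent k (Fin.snoc b u : Fin (n + 1) → V) :=
    linearIndependent_finSnoc.2 ⟨hb, hbW ▸ hu₁⟩
  refine eq_of_le_of_finrank_eq ?_ (by rw [finrank_span_eq_card hli, h₂, Fintype.card_fin])
  rw [Fin.range_snoc, span_insert, hbW]
  exact sup_le (span_singleton_le_iff_mem _ _ |>.2 hu₂) hle

theorem Submodule.span_range_codRestrict_eq_top {ι : Type*} {v : ι → V} {W : Submodule k V}
    (hv : span k (range v) = W) (hvW : ∀ j, v j ∈ W) :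
    span k (range (fun j => (⟨v j, hvW j⟩ : W))) = ⊤ := by
  apply map_injective_of_injective W.injective_subtype
  rw [map_span, ← range_comp, Submodule.map_top, range_subtype]
  exact hv

theorem extPowerImage_eq_map_exteriorPower (n : ℕ) (W : Submodule k V) :
    extPowerImage k n W = (⋀[k]^n W).map (ExteriorAlgebra.map W.subtype).toLinearMap := by
  rw [extPowerImage, Submodule.map_pow, LinearMap.range_eq_map, ← Submodule.map_comp, map_comp_ι,
    Submodule.map_comp, Submodule.map_top, range_subtype]

theorem extPowerImage_eq_span_ιMulti {n : ℕ} {v : Fin n → V} {W : Submodule k V}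
    (hv : span k (range v) = W) : extPowerImage k n W = k ∙ ιMulti k n v := by
  have hvW : ∀ j, v j ∈ W := fun j => hv ▸ subset_span (mem_range_self j)
  rw [extPowerImage_eq_map_exteriorPower, exteriorPower_eq_span_ιMulti
    (span_range_codRestrict_eq_top hv hvW), map_span, image_singleton,
    AlgHom.toLinearMap_apply, map_apply_ιMulti]
  rfl

end

theorem exists_unique_mod_vector_wedge_general (k : Type*) [Field k] (V : Type*)
    [AddCommGroup V] [Module k V] (i : ℕ) (W₁ W₂ : Submodule k V) (hle : W₁ ≤ W₂)
    (h₁ : Module.finrank k W₁ = i) (h₂ : Module.finrank k W₂ = i + 1)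
    (ω' ω : ExteriorAlgebra k V)
    (hω' : ω' ∈ extPowerImage k i W₁) (hω'0 : ω' ≠ 0)
    (hω : ω ∈ extPowerImage k (i + 1) W₂) :
    (∃ v ∈ W₂, ω' * ExteriorAlgebra.ι k v = ω) ∧
    ∀ v v' : V, ω' * ExteriorAlgebra.ι k v = ω → ω' * ExteriorAlgebra.ι k v' = ω →
      v - v' ∈ W₁ := by
  have : FiniteDimensional k W₂ := Module.finite_of_finrank_eq_succ h₂
  have : FiniteDimensional k W₁ := finiteDimensional_of_le hle
  obtain ⟨b, hb, hbW⟩ := W₁.exists_linearIndependent_span_eq h₁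
  obtain ⟨u, hu₂, hu₁⟩ := SetLike.exists_of_lt (hle.lt_of_ne (by rintro rfl; omega))
  obtain ⟨c, rfl⟩ := mem_span_singleton.1 (extPowerImage_eq_span_ιMulti hbW ▸ hω')
  obtain ⟨d, rfl⟩ := mem_span_singleton.1
    (extPowerImage_eq_span_ιMulti (span_range_snoc_eq hb hbW hle h₂ hu₂ hu₁) ▸ hω)
  have hc : c ≠ 0 := by rintro rfl; exact hω'0 (zero_smul _ _)
  rw [ιMulti_snoc]
  refine ⟨⟨(c⁻¹ * d) • u, W₂.smul_mem _ hu₂, ?_⟩, fun v v' hv hv' => ?_⟩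
  · rw [map_smul, smul_mul_smul_comm, mul_inv_cancel_left₀ hc]
  · have hzero : c • (ιMulti k i b * ι k (v - v')) = 0 := by
      rw [← smul_mul_assoc, map_sub, mul_sub, hv, hv', sub_self]
    rw [← hbW, ← ιMulti_mul_ι_eq_zero_iff hb]
    exact (smul_eq_zero.1 hzero).resolve_left hc

/-- Let `W₁ ⊂ W₂` be subspaces with `finrank W₁ = i` and
`finrank W₂ = i + 1`. For every nonzero `ω′ ∈ ⋀^i W₁` and nonzero `ω ∈ ⋀^{i+1} W₂`
(inside the exterior powers of `V`) there exists `v ∈ W₂` with `ω′ ∧ v = ω`; moreover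
any two such `v` differ by an element of `W₁`. -/
theorem exists_unique_mod_vector_wedge (k : Type*) [Field k] (V : Type*)
    [AddCommGroup V] [Module k V] (i : ℕ) (W₁ W₂ : Submodule k V) (hle : W₁ ≤ W₂)
    [FiniteDimensional k W₂]
    (h₁ : Module.finrank k W₁ = i) (h₂ : Module.finrank k W₂ = i + 1)
    (ω' ω : ExteriorAlgebra k V)
    (hω' : ω' ∈ extPowerImage k i W₁) (hω'0 : ω' ≠ 0)
    (hω : ω ∈ extPowerImage k (i + 1) W₂) (hω0 : ω ≠ 0) :
    (∃ v ∈ W₂, ω' * ExteriorAlgebra.ι k v = ω) ∧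
    ∀ v v' : V, ω' * ExteriorAlgebra.ι k v = ω → ω' * ExteriorAlgebra.ι k v' = ω →
      v - v' ∈ W₁ :=
  exists_unique_mod_vector_wedge_general k V i W₁ W₂ hle h₁ h₂ ω' ω hω' hω'0 hω
end

section
/- Let k be a field and a, b, c, d ∈ k². Define δ(u,v) = u₀·v₁ − u₁·v₀. Assume δ(c,b) ≠ 0 and δ(a,d) ≠ 0. Suppose μ, ν ∈ k satisfy a − μ·c ∈ span{b} and μ·c − ν·a ∈ span{d}. Then ν = (δ(a,b)·δ(c,d)) / (δ(b,c)·δ(d,a)). In other words, the composition of the canonical transport maps l_a → V/l_b ← l_c → V/l_d ← l_a for four lines l_a, l_b, l_c, l_d in a 2-dimensional space, with consecutive lines transverse, is multiplication by the cross ratio ⟨l_a,l_b,l_c,l_d⟩ = (ω_a∧ω_b)(ω_c∧ω_d)/((ω_b∧ω_c)(ω_d∧ω_a)). -/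
/-!
Wedging with `b` kills `span {b}`, so the first transport condition gives
`δ(a,b) = μ δ(c,b)`; wedging the second with `d` gives `μ δ(c,d) = ν δ(a,d)`.
Eliminating `μ` and using antisymmetry of `δ` yields the cross ratio.
-/

def wedge2 {k : Type*} [Field k] (u v : Fin 2 → k) : k := u 0 * v 1 - u 1 * v 0

section Wedge2

variable {k : Type*} [Field k]

theorem wedge2_swap (u v : Fin 2 → k) : wedge2 u v = -wedge2 v u := by
  unfold wedge2; ring

theorem wedge2_smul_left (t : k) (u v : Fin 2 → k) : wedge2 (t • u) v = t * wedge2 u v := by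
  simp only [wedge2, Pi.smul_apply, smul_eq_mul]; ring

theorem wedge2_eq_of_sub_mem_span_singleton {x y z : Fin 2 → k}
    (h : x - y ∈ Submodule.span k {z}) : wedge2 x z = wedge2 y z := by
  obtain ⟨t, ht⟩ := Submodule.mem_span_singleton.mp h
  have h0 := congrFun ht 0
  have h1 := congrFun ht 1
  simp only [Pi.smul_apply, Pi.sub_apply, smul_eq_mul] at h0 h1
  unfold wedge2
  linear_combination z 0 * h1 - z 1 * h0

end Wedge2

/-- For four lines in a 2-dimensional space with consecutive lines
transverse, the composition of the canonical transport maps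
`l_a → V/l_b ← l_c → V/l_d ← l_a` is multiplication by the cross ratio
`⟨l_a,l_b,l_c,l_d⟩ = δ(a,b)δ(c,d)/(δ(b,c)δ(d,a))`. -/
theorem cross_ratio_monodromy {k : Type*} [Field k] (a b c d : Fin 2 → k)
    (hcb : wedge2 c b ≠ 0) (had : wedge2 a d ≠ 0) (μ ν : k)
    (h1 : a - μ • c ∈ Submodule.span k {b})
    (h2 : μ • c - ν • a ∈ Submodule.span k {d}) :
    ν = wedge2 a b * wedge2 c d / (wedge2 b c * wedge2 d a) := by
  have hμ : wedge2 a b = μ * wedge2 c b := by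
    rw [wedge2_eq_of_sub_mem_span_singleton h1, wedge2_smul_left]
  have hν : μ * wedge2 c d = ν * wedge2 a d := by
    rw [← wedge2_smul_left, wedge2_eq_of_sub_mem_span_singleton h2, wedge2_smul_left]
  rw [wedge2_swap b c, wedge2_swap d a, neg_mul_neg, eq_div_iff (mul_ne_zero hcb had)]
  linear_combination -wedge2 c d * hμ - wedge2 c b * hν
end

section
/- Let k be a field and a, b, c, a₁, a₂, b₁, b₂, c₁, c₂ ∈ k³. For vectors u, v, w ∈ k³ let δ(u,v,w) denote the determinant of the 3 × 3 matrix with columns u, v, w, and write δ(A,w) = δ(a₁,a₂,w), δ(B,w) = δ(b₁,b₂,w), δ(C,w) = δ(c₁,c₂,w). Assume δ(B,c) ≠ 0, δ(A,b) ≠ 0, and δ(C,a) ≠ 0. Suppose μ, κ, τ ∈ k satisfy a − μ·c ∈ span{b₁,b₂}, c − κ·b ∈ span{a₁,a₂}, and b − τ·a ∈ span{c₁,c₂}. Then μ·κ·τ = (δ(B,a)·δ(A,c)·δ(C,b)) / (δ(B,c)·δ(A,b)·δ(C,a)). In other words, the microlocal monodromy around a Y-cycle equals the triple ratio ((ω_B∧ω_a)(ω_C∧ω_b)(ω_A∧ω_c))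 / ((ω_B∧ω_c)(ω_C∧ω_a)(ω_A∧ω_b)) of the three flags (l_a ⊂ l_A), (l_b ⊂ l_B), (l_c ⊂ l_C). -/
/-!
`δ(u, v, ·)` is a linear form vanishing on `span {u, v}`, so each transport condition
`x - m • y ∈ span {u, v}` yields `δ(u, v, x) = m δ(u, v, y)`. The three resulting identities
express `μ`, `κ`, `τ` as ratios of wedge pairings, and their product is the triple ratio.
-/

/-- The standard volume form on `k³`: `δ(u,v,w)` is the determinant of the `3 × 3`
matrix with columns `u`, `v`, `w`. -/
def wedge3 {k : Type*} [Field k] (u v w : Fin 3 → k) : k :=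
  (Matrix.of fun i j : Fin 3 => ![u, v, w] j i).det

section

variable {k : Type*} [Field k]

lemma wedge3_eq_detRowAlternating (u v w : Fin 3 → k) :
    wedge3 u v w = Matrix.detRowAlternating ![u, v, w] := by
  rw [wedge3, ← Matrix.det_transpose]
  rfl

def wedge3Form (u v : Fin 3 → k) : (Fin 3 → k) →ₗ[k] k :=
  Matrix.detRowAlternating.toMultilinearMap.toLinearMap ![u, v, 0] 2

lemma wedge3Form_apply (u v w : Fin 3 → k) : wedge3Form u v w = wedge3 u v w := by
  have : Function.update ![u, v, 0] 2 w = ![u, v, w] := by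
    ext i : 1
    fin_cases i <;> rfl
  rw [wedge3_eq_detRowAlternating, wedge3Form, MultilinearMap.toLinearMap_apply, this]
  rfl

lemma wedge3_eq_zero_of_mem_span {u v w : Fin 3 → k} (h : w ∈ Submodule.span k {u, v}) :
    wedge3 u v w = 0 := by
  suffices Submodule.span k {u, v} ≤ LinearMap.ker (wedge3Form u v) by
    simpa [wedge3Form_apply] using this h
  rw [Submodule.span_le, Set.insert_subset_iff, Set.singleton_subset_iff]
  simp only [SetLike.mem_coe, LinearMap.mem_ker, wedge3Form_apply, wedge3_eq_detRowAlternating]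
  exact ⟨AlternatingMap.map_eq_zero_of_eq _ _ (i := 0) (j := 2) rfl (by decide),
    AlternatingMap.map_eq_zero_of_eq _ _ (i := 1) (j := 2) rfl (by decide)⟩

lemma wedge3_eq_mul_of_sub_smul_mem_span {u v x y : Fin 3 → k} {m : k}
    (h : x - m • y ∈ Submodule.span k {u, v}) :
    wedge3 u v x = m * wedge3 u v y := by
  have := wedge3_eq_zero_of_mem_span h
  rwa [← wedge3Form_apply, map_sub, map_smul, smul_eq_mul, sub_eq_zero, wedge3Form_apply,
    wedge3Form_apply] at this

end

/-- The microlocal monodromy around a Y-cycle equals the triple ratio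
`(δ(B,a)δ(A,c)δ(C,b))/(δ(B,c)δ(A,b)δ(C,a))` of the three flags
`(l_a ⊂ l_A)`, `(l_b ⊂ l_B)`, `(l_c ⊂ l_C)`. -/
theorem triple_ratio_monodromy {k : Type*} [Field k]
    (a b c a₁ a₂ b₁ b₂ c₁ c₂ : Fin 3 → k)
    (hBc : wedge3 b₁ b₂ c ≠ 0) (hAb : wedge3 a₁ a₂ b ≠ 0) (hCa : wedge3 c₁ c₂ a ≠ 0)
    (μ κ τ : k)
    (h1 : a - μ • c ∈ Submodule.span k {b₁, b₂})
    (h2 : c - κ • b ∈ Submodule.span k {a₁, a₂})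
    (h3 : b - τ • a ∈ Submodule.span k {c₁, c₂}) :
    μ * κ * τ = (wedge3 b₁ b₂ a * wedge3 a₁ a₂ c * wedge3 c₁ c₂ b)
      / (wedge3 b₁ b₂ c * wedge3 a₁ a₂ b * wedge3 c₁ c₂ a) := by
  rw [wedge3_eq_mul_of_sub_smul_mem_span h1, wedge3_eq_mul_of_sub_smul_mem_span h2,
    wedge3_eq_mul_of_sub_smul_mem_span h3]
  field_simp
end
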